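/- In the exterior algebra over Q generated by elements r*_{ij} (1 ≤ i ≠ j ≤ n) subject to the relations r*_{ij}∧r*_{ik} = r*_{ij}∧r*_{jk} − r*_{ik}∧r*_{kj}, r*_{ik}∧r*_{jk} = r*_{ij}∧r*_{jk} − r*_{ji}∧r*_{ik}, and r*_{ij}∧r*_{ji} = 0 (i,j,k distinct), any monomial whose associated directed graph (edge (i,j) for each factor r*_{ij}) contains a loop (directed or undirected cycle) is zero. -/

import Mathlib

/-- Generator indices `(i,j)` with `1 ≤ i ≠ j ≤ n`. -/
def PvGen (n : ℕ) := {p : Fin n × Fin n // p.1 ≠ p.2}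

/-- The `ℚ`-vector space spanned by the symbols `r*_{ij}`. -/
abbrev PvV (n : ℕ) := PvGen n →₀ ℚ

/-- The generator `r*_{ij}` of the exterior algebra. -/
noncomputable def rd {n : ℕ} (i j : Fin n) (h : i ≠ j) :
    ExteriorAlgebra ℚ (PvV n) :=
  ExteriorAlgebra.ι ℚ (Finsupp.single ⟨(i, j), h⟩ (1 : ℚ))

/-- The defining relations of `pvb_n^!` inside the exterior algebra:
`r*_{ij}∧r*_{ik} = r*_{ij}∧r*_{jk} − r*_{ik}∧r*_{kj}`,
`r*_{ik}∧r*_{jk} = r*_{ij}∧r*_{jk} − r*_{ji}∧r*_{ik}`, and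
`r*_{ij}∧r*_{ji} = 0`, for `i,j,k` distinct. -/
def pvbDualRel (n : ℕ) : ExteriorAlgebra ℚ (PvV n) → ExteriorAlgebra ℚ (PvV n) → Prop :=
  fun x y => y = 0 ∧
    ((∃ (i j k : Fin n) (hij : i ≠ j) (hik : i ≠ k) (hjk : j ≠ k),
        x = rd i j hij * rd i k hik -
          (rd i j hij * rd j k hjk - rd i k hik * rd k j hjk.symm)) ∨
     (∃ (i j k : Fin n) (hij : i ≠ j) (hik : i ≠ k) (hjk : j ≠ k),
        x = rd i k hik * rd j k hjk -
          (rd i j hij * rd j k hjk - rd j i hij.symm * rd i k hik)) ∨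
     (∃ (i j : Fin n) (hij : i ≠ j), x = rd i j hij * rd j i hij.symm))

/-- The quadratic dual algebra `pvb_n^!`. -/
abbrev PvbDual (n : ℕ) := RingQuot (pvbDualRel n)

/-- The image in `pvb_n^!` of the monomial `r*_{i₁j₁}∧⋯∧r*_{iₘjₘ}` indexed by a
list of edges. -/
noncomputable def pvbMonomial {n : ℕ} (L : List (PvGen n)) : PvbDual n :=
  (L.map fun e =>
    RingQuot.mkAlgHom ℚ (pvbDualRel n)
      (ExteriorAlgebra.ι ℚ (Finsupp.single e (1 : ℚ)))).prod

/-!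
The generators anticommute, so the factors of a monomial along a cycle `c 0, …, c (m+1)` can be
brought to the front, and it suffices to show that their product vanishes. Let `I(u, w)` be the
left ideal generated by `r*_{uw}` and `r*_{wu}`. For distinct `u, v, w`, each of the three-term
relations rewrites the product of a generator over `{u, v}` and one over `{v, w}` into
`I(u, w)`, so by induction the product along the path `c 0, …, c (m+1)` lies in
`I(c 0, c (m+1))`. The last factor, over the closing edge, annihilates this ideal from the
right because `r*_{uw} ∧ r*_{uw} = 0` and `r*_{uw} ∧ r*_{wu} = 0`.
-/

namespace List

variable {α R : Type*} [Ring R] {f : α → R}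

theorem Perm.prod_map_eq_or_eq_neg_of_anticomm (hf : ∀ a b, f a * f b = -(f b * f a))
    {l l' : List α} (h : l.Perm l') :
    (l.map f).prod = (l'.map f).prod ∨ (l.map f).prod = -(l'.map f).prod := by
  induction h with
  | nil => exact Or.inl rfl
  | cons a _ ih =>
    simp only [map_cons, prod_cons]
    rcases ih with ih | ih <;> rw [ih]
    · exact Or.inl rfl
    · exact Or.inr (mul_neg _ _)
  | swap a b l =>
    right
    simp only [map_cons, prod_cons, ← mul_assoc, hf b a, neg_mul]
  | trans _ _ ih₁ ih₂ =>
    rcases ih₁ with ih₁ | ih₁ <;> rcases ih₂ with ih₂ | ih₂ <;> rw [ih₁, ih₂]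
    exacts [Or.inl rfl, Or.inr rfl, Or.inr rfl, Or.inl (neg_neg _)]

theorem Perm.prod_map_eq_zero_of_anticomm (hf : ∀ a b, f a * f b = -(f b * f a))
    {l l' : List α} (h : l.Perm l') (h' : (l'.map f).prod = 0) : (l.map f).prod = 0 := by
  rcases h.prod_map_eq_or_eq_neg_of_anticomm hf with h | h <;> simp [h, h']

theorem Subperm.prod_map_eq_zero_of_anticomm (hf : ∀ a b, f a * f b = -(f b * f a))
    {l₁ l : List α} (h : l₁.Subperm l) (h₁ : (l₁.map f).prod = 0) : (l.map f).prod = 0 := by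
  obtain ⟨l₁', hperm₁, hsub⟩ := h
  obtain ⟨l₂, hperm⟩ := hsub.exists_perm_append
  refine hperm.prod_map_eq_zero_of_anticomm hf ?_
  rw [map_append, prod_append, hperm₁.prod_map_eq_zero_of_anticomm hf h₁, zero_mul]

theorem ofFn_comp_get_subperm (L : List α) {m : ℕ} {e : Fin m → Fin L.length}
    (he : Function.Injective e) : (ofFn fun i => L.get (e i)).Subperm L := by
  obtain ⟨l, hperm, hsub⟩ : (ofFn e).Subperm (finRange L.length) :=
    subperm_of_subset (nodup_ofFn.mpr he) fun x _ => mem_finRange x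
  refine ⟨l.map L.get, ?_, ?_⟩
  · simpa only [map_ofFn, Function.comp_def] using hperm.map L.get
  · simpa only [map_get_finRange] using hsub.map L.get

end List

theorem Ideal.mul_mem_of_mem_span {A : Type*} [Semiring A] {s : Set A} {I : Ideal A} {r z : A}
    (hs : ∀ x ∈ s, x * r ∈ I) (hz : z ∈ Ideal.span s) : z * r ∈ I :=
  (Submodule.map_span_le (LinearMap.toSpanSingleton A A r) s I).mpr hs ⟨z, hz, rfl⟩

def PvGen.Joins {n : ℕ} (g : PvGen n) (u w : Fin n) : Prop :=
  g.1 = (u, w) ∨ g.1 = (w, u)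

namespace PvGen

variable {n : ℕ} {g : PvGen n} {u w : Fin n}

theorem Joins.symm (h : g.Joins u w) : g.Joins w u := Or.symm h

theorem Joins.ne (h : g.Joins u w) : u ≠ w := by
  rintro rfl
  exact g.2 (by rcases h with h | h <;> rw [h])

theorem Joins.eq_or_eq (h : g.Joins u w) (huw : u ≠ w) :
    g = ⟨(u, w), huw⟩ ∨ g = ⟨(w, u), huw.symm⟩ :=
  h.imp Subtype.ext Subtype.ext

end PvGen

namespace PvbDual

variable {n : ℕ}

noncomputable def gen (e : PvGen n) : PvbDual n :=
  RingQuot.mkAlgHom ℚ (pvbDualRel n) (ExteriorAlgebra.ι ℚ (Finsupp.single e (1 : ℚ)))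

theorem pvbMonomial_eq_prod_map_gen (L : List (PvGen n)) : pvbMonomial L = (L.map gen).prod :=
  rfl

theorem gen_mul_self (e : PvGen n) : gen e * gen e = 0 := by
  rw [gen, ← map_mul, ExteriorAlgebra.ι_sq_zero, map_zero]

theorem gen_mul_gen_anticomm (e f : PvGen n) : gen e * gen f = -(gen f * gen e) := by
  simp only [gen, ← map_mul, ← map_neg]
  rw [eq_neg_of_add_eq_zero_left (ExteriorAlgebra.ι_add_mul_swap _ _)]

theorem mkAlgHom_eq_zero_of_rel {x : ExteriorAlgebra ℚ (PvV n)} (h : pvbDualRel n x 0) :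
    RingQuot.mkAlgHom ℚ (pvbDualRel n) x = 0 := by
  simpa using RingQuot.mkAlgHom_rel ℚ h

theorem gen_mul_gen_reverse (i j : Fin n) (h : i ≠ j) :
    gen ⟨(i, j), h⟩ * gen ⟨(j, i), h.symm⟩ = 0 := by
  simpa [rd, gen] using mkAlgHom_eq_zero_of_rel (⟨rfl, .inr (.inr ⟨i, j, h, rfl⟩)⟩ :
    pvbDualRel n (rd i j h * rd j i h.symm) 0)

theorem gen_mul_gen_of_fst_eq (i j k : Fin n) (hij : i ≠ j) (hik : i ≠ k) (hjk : j ≠ k) :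
    gen ⟨(i, j), hij⟩ * gen ⟨(i, k), hik⟩ =
      gen ⟨(i, j), hij⟩ * gen ⟨(j, k), hjk⟩ - gen ⟨(i, k), hik⟩ * gen ⟨(k, j), hjk.symm⟩ := by
  have := mkAlgHom_eq_zero_of_rel (⟨rfl, .inl ⟨i, j, k, hij, hik, hjk, rfl⟩⟩ :
    pvbDualRel n (rd i j hij * rd i k hik -
      (rd i j hij * rd j k hjk - rd i k hik * rd k j hjk.symm)) 0)
  simp only [map_sub, map_mul, sub_eq_zero] at this
  exact this

theorem gen_mul_gen_of_snd_eq (i j k : Fin n) (hij : i ≠ j) (hik : i ≠ k) (hjk : j ≠ k) :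
    gen ⟨(i, k), hik⟩ * gen ⟨(j, k), hjk⟩ =
      gen ⟨(i, j), hij⟩ * gen ⟨(j, k), hjk⟩ - gen ⟨(j, i), hij.symm⟩ * gen ⟨(i, k), hik⟩ := by
  have := mkAlgHom_eq_zero_of_rel (⟨rfl, .inr (.inl ⟨i, j, k, hij, hik, hjk, rfl⟩)⟩ :
    pvbDualRel n (rd i k hik * rd j k hjk -
      (rd i j hij * rd j k hjk - rd j i hij.symm * rd i k hik)) 0)
  simp only [map_sub, map_mul, sub_eq_zero] at this
  exact this

noncomputable def edgeIdeal (u w : Fin n) : Ideal (PvbDual n) :=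
  Ideal.span (gen '' {g | g.Joins u w})

variable {u v w : Fin n} {g g₁ g₂ : PvGen n} {z : PvbDual n}

theorem gen_mem_edgeIdeal (h : g.Joins u w) : gen g ∈ edgeIdeal u w :=
  Ideal.subset_span ⟨g, h, rfl⟩

theorem gen_mul_gen_mem_edgeIdeal (huw : u ≠ w) (h₁ : g₁.Joins u v) (h₂ : g₂.Joins v w) :
    gen g₁ * gen g₂ ∈ edgeIdeal u w := by
  have huv := h₁.ne
  have hvw := h₂.ne
  suffices ∃ a b, gen g₁ * gen g₂ = a * gen ⟨(u, w), huw⟩ + b * gen ⟨(w, u), huw.symm⟩ by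
    obtain ⟨a, b, hab⟩ := this
    rw [hab]
    exact add_mem (Ideal.mul_mem_left _ _ (gen_mem_edgeIdeal (Or.inl rfl)))
      (Ideal.mul_mem_left _ _ (gen_mem_edgeIdeal (Or.inr rfl)))
  obtain rfl | rfl := h₁.eq_or_eq huv <;> obtain rfl | rfl := h₂.eq_or_eq hvw
  · refine ⟨gen ⟨(u, v), huv⟩ - gen ⟨(w, v), hvw.symm⟩, 0, ?_⟩
    rw [sub_mul, zero_mul, add_zero, gen_mul_gen_of_fst_eq u v w huv huw hvw,
      gen_mul_gen_anticomm ⟨(w, v), _⟩ ⟨(u, w), _⟩]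
    abel
  · refine ⟨-gen ⟨(w, v), hvw.symm⟩, gen ⟨(u, v), huv⟩, ?_⟩
    rw [gen_mul_gen_of_snd_eq u w v huw huv hvw.symm, neg_mul,
      gen_mul_gen_anticomm ⟨(w, v), _⟩ ⟨(u, w), _⟩, neg_neg,
      gen_mul_gen_anticomm ⟨(u, v), _⟩ ⟨(w, u), _⟩]
    abel
  · refine ⟨gen ⟨(v, u), huv.symm⟩, -gen ⟨(v, w), hvw⟩, ?_⟩
    rw [gen_mul_gen_of_fst_eq v u w huv.symm hvw huw, neg_mul]
    abel
  · refine ⟨0, gen ⟨(u, v), huv⟩ - gen ⟨(w, v), hvw.symm⟩, ?_⟩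
    rw [zero_mul, zero_add, sub_mul, gen_mul_gen_anticomm ⟨(v, u), _⟩ ⟨(w, v), _⟩,
      gen_mul_gen_anticomm ⟨(u, v), _⟩ ⟨(w, u), _⟩,
      gen_mul_gen_of_fst_eq w v u hvw.symm huw.symm huv.symm]
    abel

theorem mul_gen_mem_edgeIdeal (huw : u ≠ w) (hz : z ∈ edgeIdeal u v) (hg : g.Joins v w) :
    z * gen g ∈ edgeIdeal u w :=
  Ideal.mul_mem_of_mem_span
    (by rintro _ ⟨g', hg', rfl⟩; exact gen_mul_gen_mem_edgeIdeal huw hg' hg) hz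

theorem gen_mul_gen_eq_zero_of_joins (h₁ : g₁.Joins u w) (h₂ : g₂.Joins u w) :
    gen g₁ * gen g₂ = 0 := by
  have huw := h₁.ne
  obtain rfl | rfl := h₁.eq_or_eq huw <;> obtain rfl | rfl := h₂.eq_or_eq huw
  exacts [gen_mul_self _, gen_mul_gen_reverse u w _, gen_mul_gen_reverse w u _, gen_mul_self _]

theorem mul_gen_eq_zero_of_mem_edgeIdeal (hz : z ∈ edgeIdeal u w) (hg : g.Joins u w) :
    z * gen g = 0 := by
  have : z * gen g ∈ (⊥ : Ideal (PvbDual n)) := Ideal.mul_mem_of_mem_span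
    (by rintro _ ⟨g', hg', rfl⟩; rw [gen_mul_gen_eq_zero_of_joins hg' hg]; exact zero_mem _) hz
  simpa using this

theorem prod_ofFn_gen_mem_edgeIdeal_of_path {k : ℕ} {c : Fin (k + 2) → Fin n}
    (hc : Function.Injective c) {d : Fin (k + 1) → PvGen n}
    (hd : ∀ i, (d i).Joins (c i.castSucc) (c i.succ)) :
    (List.ofFn fun i => gen (d i)).prod ∈ edgeIdeal (c 0) (c (Fin.last _)) := by
  induction k with
  | zero => simpa using gen_mem_edgeIdeal (hd 0)
  | succ k ih =>
    rw [List.ofFn_succ', List.prod_concat]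
    refine mul_gen_mem_edgeIdeal (hc.ne (by simp [Fin.ext_iff]))
      (ih (hc.comp (Fin.castSucc_injective _)) fun i => ?_) ?_
    · simpa only [Function.comp_apply, Fin.succ_castSucc] using hd i.castSucc
    · simpa only [Function.comp_apply, Fin.succ_last] using hd (Fin.last _)

theorem prod_ofFn_gen_eq_zero_of_cycle {m : ℕ} {c : Fin (m + 2) → Fin n}
    (hc : Function.Injective c) {d : Fin (m + 2) → PvGen n}
    (hd : ∀ i, (d i).Joins (c i) (c (i + 1))) :
    (List.ofFn fun i => gen (d i)).prod = 0 := by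
  rw [List.ofFn_succ', List.prod_concat]
  refine mul_gen_eq_zero_of_mem_edgeIdeal (prod_ofFn_gen_mem_edgeIdeal_of_path hc fun i => ?_) ?_
  · simpa only [Fin.coeSucc_eq_succ] using hd i.castSucc
  · simpa only [Fin.last_add_one] using (hd (Fin.last _)).symm

end PvbDual

/-- In `pvb_n^!`, any monomial whose associated directed graph contains a loop
(a cycle in the underlying undirected multigraph, given by distinct vertices
`c 0, …, c (m+1)` and distinct edge occurrences joining consecutive vertices
cyclically) is zero. -/
theorem pvbDual_monomial_with_loop_eq_zero {n : ℕ} (L : List (PvGen n))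
    (hloop : ∃ (m : ℕ) (c : Fin (m + 2) → Fin n) (e : Fin (m + 2) → Fin L.length),
      Function.Injective c ∧ Function.Injective e ∧
        ∀ i : Fin (m + 2),
          (L.get (e i)).val = (c i, c (i + 1)) ∨
          (L.get (e i)).val = (c (i + 1), c i)) :
    pvbMonomial L = 0 := by
  obtain ⟨m, c, e, hc, he, hcycle⟩ := hloop
  rw [PvbDual.pvbMonomial_eq_prod_map_gen]
  refine (L.ofFn_comp_get_subperm he).prod_map_eq_zero_of_anticomm
    PvbDual.gen_mul_gen_anticomm ?_
  rw [List.map_ofFn]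
  exact PvbDual.prod_ofFn_gen_eq_zero_of_cycle hc hcycle
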